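/- Fix reals α∈(0,1), θ>0, λ>0 with √(λθ)<1, and an integer J≥1, and assume 1−α^{J−1}·(1−√(λθ)) < v_th∞(λ) < 1−α^{J}·(1−√(λθ)). Then the deterministic myopic recursion satisfies, for every k≥1, V_k = 1 − α^{1+((k−1) mod J)}·(1−√(λθ)); in particular V_{k+J} = V_k for all k≥1. -/
import Mathlib


/-- The `S_A = ∞` threshold `v_th∞(λ)`. -/
noncomputable def vthinf (th lam : ℝ) : ℝ :=
  Real.sqrt (lam * th) + lam / 2 +
    Real.sqrt lam * Real.sqrt (Real.sqrt (lam * th) + lam / 4)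

private lemma mod_succ_aux (m J : ℕ) (hJ : 1 ≤ J) :
    (m + 1) % J = if m % J = J - 1 then 0 else m % J + 1 := by
  rcases Nat.lt_or_ge J 2 with h2 | h2
  · interval_cases J
    simp [Nat.mod_one]
  · rw [Nat.add_mod, Nat.mod_eq_of_lt (show 1 < J by omega)]
    by_cases hm : m % J = J - 1
    · rw [if_pos hm, hm, show J - 1 + 1 = J by omega, Nat.mod_self]
    · rw [if_neg hm]
      have hlt : m % J < J := Nat.mod_lt _ (by omega)
      exact Nat.mod_eq_of_lt (by omega)

/-- under the stated threshold condition, the deterministic myopic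
recursion is eventually periodic with period `J`:
`V_k = 1 − α^{1+((k−1) mod J)}·(1−√(λθ))` for all `k ≥ 1`. -/
theorem stmt_6 (alpha th lam : ℝ) (halpha : alpha ∈ Set.Ioo (0 : ℝ) 1)
    (hth : 0 < th) (hlam : 0 < lam) (hsq : Real.sqrt (lam * th) < 1)
    (J : ℕ) (hJ : 1 ≤ J)
    (hlow : 1 - alpha ^ (J - 1) * (1 - Real.sqrt (lam * th)) < vthinf th lam)
    (hhigh : vthinf th lam < 1 - alpha ^ J * (1 - Real.sqrt (lam * th)))
    (V : ℕ → ℝ) (hV0 : V 0 = 1)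
    (hrec : ∀ k : ℕ, V (k + 1) =
      1 - alpha * (1 - (if vthinf th lam < V k then Real.sqrt (lam * th) else V k))) :
    (∀ k : ℕ, 1 ≤ k →
      V k = 1 - alpha ^ (1 + (k - 1) % J) * (1 - Real.sqrt (lam * th))) ∧
    (∀ k : ℕ, 1 ≤ k → V (k + J) = V k) := by
  obtain ⟨ha0, ha1⟩ := halpha
  have hc : 0 < 1 - Real.sqrt (lam * th) := by linarith
  have hmain : ∀ k : ℕ, 1 ≤ k →
      V k = 1 - alpha ^ (1 + (k - 1) % J) * (1 - Real.sqrt (lam * th)) := by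
    intro k hk
    induction k with
    | zero => omega
    | succ n ih =>
      rcases Nat.eq_zero_or_pos n with hn | hn
      · subst hn
        have hv1 : vthinf th lam < V 0 := by
          rw [hV0]
          have : 0 < alpha ^ J * (1 - Real.sqrt (lam * th)) := by positivity
          linarith
        rw [hrec 0, if_pos hv1]
        simp
      · have ihn := ih hn
        have hmod : (n + 1 - 1) % J =
            if (n - 1) % J = J - 1 then 0 else (n - 1) % J + 1 := by
          simp only [Nat.add_sub_cancel]
          conv_lhs => rw [← Nat.sub_add_cancel hn]
          exact mod_succ_aux _ _ hJ
        by_cases hcase : (n - 1) % J = J - 1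
        · have hVn : V n = 1 - alpha ^ J * (1 - Real.sqrt (lam * th)) := by
            rw [ihn, hcase, show 1 + (J - 1) = J from by omega]
          have hthr : vthinf th lam < V n := by rw [hVn]; exact hhigh
          rw [hrec n, if_pos hthr, hmod, if_pos hcase]
          ring
        · have hle : 1 + (n - 1) % J ≤ J - 1 := by
            have := Nat.mod_lt (n - 1) (show 0 < J by omega)
            omega
          have hpow : alpha ^ (J - 1) ≤ alpha ^ (1 + (n - 1) % J) :=
            pow_le_pow_of_le_one ha0.le ha1.le hle
          have hthr : ¬ vthinf th lam < V n := by
            push_neg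
            rw [ihn]
            nlinarith [mul_le_mul_of_nonneg_right hpow hc.le]
          rw [hrec n, if_neg hthr, ihn, hmod, if_neg hcase,
            show 1 + ((n - 1) % J + 1) = (1 + (n - 1) % J) + 1 from by omega, pow_succ]
          ring
  refine ⟨hmain, fun k hk => ?_⟩
  rw [hmain k hk, hmain (k + J) (by omega),
    show k + J - 1 = (k - 1) + J from by omega, Nat.add_mod_right]
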